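/- arXiv:math/0503690 — 3 statements merged into one kernel-verified Lean document; each statement's English description precedes it below -/
import Mathlib

section
/- Suppose φ: M → G is α-Hölder (d(φ(x), φ(y)) ≤ C ρ(x,y)^α), points y_i, z_i satisfy ρ(y_i, z_i) ≤ K λ^{-i} ρ(y_0, z_0) for all i ≥ 0 with λ > 1, and sup_i ‖Ad(φ_i(y_i))‖ μ_u^{-i} < ∞ with 1 ≤ μ_u < λ^α. Then the sums Σ_{i=0}^{n-1} ‖Ad(φ_i(y_i))‖ d(φ(y_{i+1}), φ(z_{i+1})) are uniformly bounded by C' ρ(y_0, z_0)^α for a constant C' independent of n. -/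
open Finset in
/-- under the partial hyperbolicity condition `1 ≤ μ_u < λ^α`, the sums
`Σ_{i=0}^{n-1} ‖Ad(φ_i(y_i))‖ d(φ(y_{i+1}), φ(z_{i+1}))` are uniformly bounded by
`C' ρ(y_0, z_0)^α`.  Here `A i` stands for `‖Ad(φ_i(y_i))‖`, subject to the stated
bound `sup_i A i μ_u^{-i} < ∞`, i.e. `A i ≤ Msup * μ_u^i`. -/
theorem livsic_stmt4 {M G : Type*} [MetricSpace M] [MetricSpace G]
    (φ : M → G) (y z : ℕ → M) (A : ℕ → ℝ) (C K lam μu α Msup : ℝ)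
    (hC : 0 < C) (hK : 0 < K) (hlam : 1 < lam) (hα : 0 < α)
    (hHolder : ∀ x x' : M, dist (φ x) (φ x') ≤ C * dist x x' ^ α)
    (hcontract : ∀ i : ℕ, dist (y i) (z i) ≤ K * lam ^ (-(i : ℝ)) * dist (y 0) (z 0))
    (hAnonneg : ∀ i, 0 ≤ A i)
    (hAbound : 0 < Msup ∧ ∀ i : ℕ, A i ≤ Msup * μu ^ i)
    (hμu1 : 1 ≤ μu) (hPH : μu < lam ^ α) :
    ∃ C' : ℝ, 0 < C' ∧ ∀ n : ℕ,
      ∑ i ∈ range n, A i * dist (φ (y (i + 1))) (φ (z (i + 1))) ≤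
        C' * dist (y 0) (z 0) ^ α := by
  obtain ⟨hM, hA⟩ := hAbound
  have hlam0 : (0:ℝ) < lam := lt_trans one_pos hlam
  have hlamα : 0 < lam ^ α := Real.rpow_pos_of_pos hlam0 α
  have hμu0 : (0:ℝ) < μu := lt_of_lt_of_le one_pos hμu1
  set r : ℝ := μu / lam ^ α with hr
  have hr0 : 0 ≤ r := div_nonneg hμu0.le hlamα.le
  have hr1 : r < 1 := (div_lt_one hlamα).2 hPH
  have hKα : 0 < K ^ α := Real.rpow_pos_of_pos hK α
  have hd0 : (0:ℝ) ≤ dist (y 0) (z 0) := dist_nonneg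
  have h1r : (0:ℝ) < 1 - r := by linarith
  refine ⟨Msup * C * K ^ α / lam ^ α / (1 - r),
    div_pos (div_pos (by positivity) hlamα) h1r, fun n => ?_⟩
  have key : ∀ i : ℕ, A i * dist (φ (y (i + 1))) (φ (z (i + 1))) ≤
      (Msup * C * K ^ α / lam ^ α * dist (y 0) (z 0) ^ α) * r ^ i := by
    intro i
    have h1 : dist (φ (y (i+1))) (φ (z (i+1))) ≤
        C * (K * lam ^ (-((i+1:ℕ) : ℝ)) * dist (y 0) (z 0)) ^ α := by
      refine le_trans (hHolder _ _) ?_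
      have := Real.rpow_le_rpow dist_nonneg (hcontract (i+1)) hα.le
      exact mul_le_mul_of_nonneg_left this hC.le
    have h2 : (K * lam ^ (-((i+1:ℕ) : ℝ)) * dist (y 0) (z 0)) ^ α
        = K ^ α * ((lam ^ α) ^ (i+1))⁻¹ * dist (y 0) (z 0) ^ α := by
      have hl : (0:ℝ) ≤ lam ^ (-((i+1:ℕ) : ℝ)) := (Real.rpow_pos_of_pos hlam0 _).le
      rw [Real.mul_rpow (by positivity) hd0, Real.mul_rpow hK.le hl]
      congr 2
      calc (lam ^ (-((i+1:ℕ) : ℝ))) ^ α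
          = lam ^ ((-((i+1:ℕ) : ℝ)) * α) := (Real.rpow_mul hlam0.le _ _).symm
        _ = lam ^ (α * (-((i+1:ℕ) : ℝ))) := by rw [mul_comm]
        _ = (lam ^ α) ^ (-((i+1:ℕ) : ℝ)) := Real.rpow_mul hlam0.le _ _
        _ = ((lam ^ α) ^ (((i+1:ℕ) : ℝ)))⁻¹ := Real.rpow_neg hlamα.le _
        _ = ((lam ^ α) ^ (i+1))⁻¹ := by rw [Real.rpow_natCast]
    have h3 : A i * dist (φ (y (i + 1))) (φ (z (i + 1))) ≤
        (Msup * μu ^ i) * (C * (K ^ α * ((lam ^ α) ^ (i+1))⁻¹ * dist (y 0) (z 0) ^ α)) := by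
      have := le_trans h1 (le_of_eq (by rw [h2]))
      exact mul_le_mul (hA i) this dist_nonneg (by positivity)
    refine le_trans h3 (le_of_eq ?_)
    rw [hr, div_pow, pow_succ]
    field_simp
  calc ∑ i ∈ range n, A i * dist (φ (y (i + 1))) (φ (z (i + 1)))
      ≤ ∑ i ∈ range n, (Msup * C * K ^ α / lam ^ α * dist (y 0) (z 0) ^ α) * r ^ i :=
        Finset.sum_le_sum fun i _ => key i
    _ = (Msup * C * K ^ α / lam ^ α * dist (y 0) (z 0) ^ α) * ∑ i ∈ range n, r ^ i := by
        rw [Finset.mul_sum]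
    _ ≤ (Msup * C * K ^ α / lam ^ α * dist (y 0) (z 0) ^ α) * (1 - r)⁻¹ := by
        refine mul_le_mul_of_nonneg_left ?_ (by positivity)
        rw [geom_sum_eq (ne_of_lt hr1), div_le_iff_of_neg (by linarith : r - 1 < 0)]
        have he : (1 - r)⁻¹ * (r - 1) = -1 := by field_simp; ring
        have hrn : (0:ℝ) ≤ r ^ n := pow_nonneg hr0 n
        linarith
    _ = Msup * C * K ^ α / lam ^ α / (1 - r) * dist (y 0) (z 0) ^ α := by ring
end

section
/- Let T be the Manneville–Pomeau map T(x) = x + 2^p x^{1+p} for x ∈ [0, 1/2) and T(x) = 2x − 1 for x ∈ [1/2, 1], with p > 0. Denote by T^{-n}(1/2) the n-th preimage of 1/2 under the left branch. Then T^{-n}(1/2) = (1/2)(pn)^{-1/p} + o(n^{-1/p}) as n → ∞. -/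
open Filter Topology

/-- for the Manneville–Pomeau map `T(x) = x + 2^p x^{1+p}` on `[0,1/2)`,
the backward orbit `x_n = T^{-n}(1/2)` of `1/2` under the left branch satisfies
`x_n = (1/2)(pn)^{-1/p} + o(n^{-1/p})`, i.e. `x_n (pn)^{1/p} → 1/2`. -/
theorem livsic_stmt7 (p : ℝ) (hp : 0 < p) (x : ℕ → ℝ)
    (hx0 : x 0 = 1 / 2)
    (hrange : ∀ n, 0 < x (n + 1) ∧ x (n + 1) < 1 / 2)
    (hbranch : ∀ n, x n = x (n + 1) + 2 ^ p * x (n + 1) ^ (1 + p)) :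
    Tendsto (fun n : ℕ => x n * (p * n) ^ (1 / p)) atTop (nhds (1 / 2)) := by
  have h2p : (0:ℝ) < 2 ^ p := Real.rpow_pos_of_pos two_pos p
  have hpos : ∀ n, 0 < x n := by
    intro n
    cases n with
    | zero => rw [hx0]; norm_num
    | succ k => exact (hrange k).1
  have hdec : ∀ n, x (n + 1) < x n := by
    intro n
    have h := hbranch n
    nlinarith [Real.rpow_pos_of_pos (hpos (n+1)) (1+p)]
  -- x tends to its infimum L, and L = 0
  have hanti : Antitone x := antitone_nat_of_succ_le fun n => (hdec n).le
  have hbdd : BddBelow (Set.range x) := ⟨0, by rintro y ⟨n, rfl⟩; exact (hpos n).le⟩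
  set L := ⨅ n, x n with hLdef
  have hxL : Tendsto x atTop (𝓝 L) := tendsto_atTop_ciInf hanti hbdd
  have hL0 : 0 ≤ L := le_ciInf fun n => (hpos n).le
  have hx1L : Tendsto (fun n => x (n+1)) atTop (𝓝 L) := hxL.comp (tendsto_add_atTop_nat 1)
  have hLzero : L = 0 := by
    by_contra h
    have hLpos : 0 < L := lt_of_le_of_ne hL0 (Ne.symm h)
    have h2 : Tendsto (fun n => x (n+1) + 2 ^ p * x (n+1) ^ (1+p)) atTop
        (𝓝 (L + 2 ^ p * L ^ (1+p))) :=
      hx1L.add ((hx1L.rpow_const (Or.inl hLpos.ne')).const_mul _)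
    have h3 : Tendsto x atTop (𝓝 (L + 2 ^ p * L ^ (1+p))) :=
      h2.congr fun n => (hbranch n).symm
    have h4 := tendsto_nhds_unique hxL h3
    nlinarith [Real.rpow_pos_of_pos hLpos (1+p)]
  have hx0' : Tendsto x atTop (𝓝 0) := hLzero ▸ hxL
  have hx1' : Tendsto (fun n => x (n+1)) atTop (𝓝 0) := hLzero ▸ hx1L
  set u : ℕ → ℝ := fun n => 2 ^ p * x (n+1) ^ p with hu
  have hupos : ∀ n, 0 < u n := fun n => mul_pos h2p (Real.rpow_pos_of_pos (hpos (n+1)) p)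
  have hu0 : Tendsto u atTop (𝓝 0) := by
    have h1 := hx1'.rpow_const (Or.inr hp.le)
    rw [Real.zero_rpow hp.ne'] at h1
    simpa using h1.const_mul ((2:ℝ) ^ p)
  -- derivative of (1+t)^(-p) at 0 is -p
  have hderiv : HasDerivAt (fun t : ℝ => (1 + t) ^ (-p)) (-p) 0 := by
    have h1 : HasDerivAt (fun t : ℝ => 1 + t) 1 0 := (hasDerivAt_id 0).const_add 1
    have h2 := h1.rpow_const (p := -p) (by norm_num)
    simpa [Real.one_rpow] using h2
  have hslope : Tendsto (fun t : ℝ => ((1 + t) ^ (-p) - 1) / t) (𝓝[≠] 0) (𝓝 (-p)) := by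
    have h1 := hasDerivAt_iff_tendsto_slope.1 hderiv
    refine h1.congr fun t => ?_
    simp [slope_def_field, Real.one_rpow]
  have huS : Tendsto u atTop (𝓝[≠] 0) :=
    tendsto_nhdsWithin_of_tendsto_nhds_of_eventually_within _ hu0
      (Eventually.of_forall fun n => (hupos n).ne')
  have hkey : Tendsto (fun n => ((1 + u n) ^ (-p) - 1) / u n) atTop (𝓝 (-p)) :=
    hslope.comp huS
  set y : ℕ → ℝ := fun n => x n ^ (-p) with hy
  have hypos : ∀ n, 0 < y n := fun n => Real.rpow_pos_of_pos (hpos n) _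
  have hyrec : ∀ n, y (n+1) - y n = 2 ^ p * (-(((1 + u n) ^ (-p) - 1) / u n)) := by
    intro n
    have hx1 : (0:ℝ) < x (n+1) := hpos (n+1)
    have h1un : (0:ℝ) < 1 + u n := by linarith [hupos n]
    have hxn : x n = x (n+1) * (1 + u n) := by
      rw [hbranch n, hu, Real.rpow_add hx1, Real.rpow_one]
      ring
    have hyn : y n = y (n+1) * (1 + u n) ^ (-p) := by
      simp only [hy]
      rw [hxn, Real.mul_rpow hx1.le h1un.le]
    have hyu : y (n+1) * u n = 2 ^ p := by
      have h2 : x (n+1) ^ (-p) * x (n+1) ^ p = 1 := by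
        rw [← Real.rpow_add hx1]; simp
      calc y (n+1) * u n = 2 ^ p * (x (n+1) ^ (-p) * x (n+1) ^ p) := by
            simp only [hy, hu]; ring
        _ = 2 ^ p := by rw [h2, mul_one]
    have hun : u n ≠ 0 := (hupos n).ne'
    rw [hyn]
    field_simp
    linear_combination (1 - (1 + u n) ^ (-p)) * hyu
  have hdiff : Tendsto (fun n => y (n+1) - y n) atTop (𝓝 (p * 2 ^ p)) := by
    have h1 : Tendsto (fun n => 2 ^ p * (-(((1 + u n) ^ (-p) - 1) / u n))) atTop
        (𝓝 (2 ^ p * (-(-p)))) := hkey.neg.const_mul _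
    have h2 : (2:ℝ) ^ p * (-(-p)) = p * 2 ^ p := by ring
    rw [h2] at h1
    exact h1.congr fun n => (hyrec n).symm
  have hces := hdiff.cesaro
  have hyn : Tendsto (fun n : ℕ => y n / n) atTop (𝓝 (p * 2 ^ p)) := by
    have h0 : Tendsto (fun n : ℕ => y 0 / n) atTop (𝓝 0) :=
      tendsto_const_div_atTop_nhds_zero_nat _
    have h1 := hces.add h0
    rw [add_zero] at h1
    refine h1.congr fun n => ?_
    rw [Finset.sum_range_sub y n]
    field_simp
    ring
  have h2pp : (0:ℝ) < p * 2 ^ p := mul_pos hp h2p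
  have hfin : Tendsto (fun n : ℕ => p * n / y n) atTop (𝓝 ((2:ℝ) ^ (-p))) := by
    have h1 := Tendsto.div (tendsto_const_nhds (x := p)) hyn h2pp.ne'
    have hval : p / (p * 2 ^ p) = (2:ℝ) ^ (-p) := by
      rw [Real.rpow_neg (by norm_num : (0:ℝ) ≤ 2)]
      field_simp
    rw [hval] at h1
    apply h1.congr'
    filter_upwards [eventually_gt_atTop 0] with n hn
    have hn' : (0:ℝ) < n := Nat.cast_pos.2 hn
    simp only [Pi.div_apply]
    rw [div_div_eq_mul_div, mul_comm]
  have hcont : Tendsto (fun n : ℕ => (p * n / y n) ^ (1/p)) atTop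
      (𝓝 (((2:ℝ) ^ (-p)) ^ (1/p))) :=
    hfin.rpow_const (Or.inl (Real.rpow_pos_of_pos two_pos _).ne')
  have hval2 : ((2:ℝ) ^ (-p)) ^ (1/p) = 1/2 := by
    rw [← Real.rpow_mul (by norm_num : (0:ℝ) ≤ 2)]
    have : -p * (1/p) = -1 := by field_simp
    rw [this, Real.rpow_neg_one]
    norm_num
  rw [hval2] at hcont
  apply hcont.congr'
  filter_upwards [eventually_gt_atTop 0] with n hn
  have hn' : (0:ℝ) < n := Nat.cast_pos.2 hn
  have hpn : (0:ℝ) < p * n := mul_pos hp hn'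
  have h1 : p * n / y n = (p * n) * x n ^ p := by
    simp only [hy]
    rw [Real.rpow_neg (hpos n).le, div_eq_mul_inv, inv_inv]
  rw [h1, Real.mul_rpow hpn.le (Real.rpow_pos_of_pos (hpos n) p).le]
  have h2 : (x n ^ p) ^ (1/p) = x n := by
    rw [← Real.rpow_mul (hpos n).le, mul_one_div, div_self hp.ne', Real.rpow_one]
  rw [h2]
  ring
end

section
/- Let (n_k)_{k≥0} be a strictly increasing sequence of naturals with n_{k+1} − n_0 ≤ (1+ε)(n_k − n_0) for all k ≥ k_0, and suppose a_n ≥ 0 satisfies: a_{n_k} ≤ B · λ_0^{-k} and a_n ≤ δ_0^{-1} a_{n_k} for n_k ≤ n < n_{k+1}, where λ_0 > 1, δ_0, B > 0, and (1/k)(n_k − n_0) → R ∈ (0,∞). Then limsup_n a_n^{1/n} ≤ λ_0^{−1/((1+ε)R)}. -/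
open Filter

/-- abstract contraction-rate computation of Lemma 5.1.  With return
times `n_k` satisfying `n_{k+1} − n_0 ≤ (1+ε)(n_k − n_0)` eventually,
`a_{n_k} ≤ B λ₀^{−k}`, `a_n ≤ δ₀⁻¹ a_{n_k}` for `n_k ≤ n < n_{k+1}`, and mean return
time `(n_k − n_0)/k → R ∈ (0, ∞)`, one gets `limsup_n a_n^{1/n} ≤ λ₀^{−1/((1+ε)R)}`. -/
theorem livsic_stmt17 (nk : ℕ → ℕ) (hmono : StrictMono nk)
    (ε : ℝ) (hε : 0 < ε) (k₀ : ℕ)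
    (hgap : ∀ k ≥ k₀, ((nk (k + 1) - nk 0 : ℕ) : ℝ) ≤ (1 + ε) * ((nk k - nk 0 : ℕ) : ℝ))
    (a : ℕ → ℝ) (ha : ∀ n, 0 ≤ a n)
    (lam₀ δ₀ B R : ℝ) (hlam₀ : 1 < lam₀) (hδ₀ : 0 < δ₀) (hB : 0 < B) (hR : 0 < R)
    (hank : ∀ k : ℕ, a (nk k) ≤ B * lam₀ ^ (-(k : ℝ)))
    (hbetween : ∀ k n : ℕ, nk k ≤ n → n < nk (k + 1) → a n ≤ δ₀⁻¹ * a (nk k))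
    (hkac : Tendsto (fun k : ℕ => ((nk k - nk 0 : ℕ) : ℝ) / k) atTop (nhds R)) :
    Filter.limsup (fun n : ℕ => a n ^ (1 / (n : ℝ))) atTop ≤
      lam₀ ^ (-(1 / ((1 + ε) * R))) := by
  have hlampos : (0:ℝ) < lam₀ := lt_trans one_pos hlam₀
  have hloglam : 0 < Real.log lam₀ := Real.log_pos hlam₀
  have h1ε : (0:ℝ) < 1 + ε := by linarith
  have hLpos : 0 < lam₀ ^ (-(1 / ((1 + ε) * R))) := Real.rpow_pos_of_pos hlampos _
  -- the index function
  set kn : ℕ → ℕ := fun n => Nat.findGreatest (fun k => nk k ≤ n) n with hknd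
  have hle : ∀ j, j ≤ nk j := fun j => hmono.le_apply
  have hA : ∀ n, nk 0 ≤ n → nk (kn n) ≤ n := fun n hn =>
    Nat.findGreatest_spec (P := fun k => nk k ≤ n) (Nat.zero_le n) hn
  have hBB : ∀ n, n < nk (kn n + 1) := by
    intro n
    by_contra h
    push_neg at h
    have h1 : kn n + 1 ≤ n := le_trans (hle _) h
    exact Nat.findGreatest_is_greatest (Nat.lt_succ_self _) h1 h
  have hC : ∀ K n, nk K ≤ n → K ≤ kn n := fun K n h =>
    Nat.le_findGreatest (le_trans (hle K) h) h
  apply le_of_forall_gt_imp_ge_of_dense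
  intro c hc
  have hcpos : 0 < c := lt_trans hLpos hc
  have hd : -(1 / ((1 + ε) * R)) * Real.log lam₀ < Real.log c := by
    rw [← Real.log_rpow hlampos (-(1 / ((1 + ε) * R)))]
    exact Real.log_lt_log hLpos hc
  -- choose θ
  obtain ⟨θ, hθ0, hθ1, hθ⟩ : ∃ θ : ℝ, 0 < θ ∧ θ < 1 ∧
      θ - (1 - θ) / ((1 + ε) * (R + θ)) * Real.log lam₀ < Real.log c := by
    have hcont : ContinuousAt
        (fun θ : ℝ => θ - (1 - θ) / ((1 + ε) * (R + θ)) * Real.log lam₀) 0 := by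
      have hne : (1 + ε) * (R + (0:ℝ)) ≠ 0 := by positivity
      fun_prop (disch := assumption)
    have h0 : (fun θ : ℝ => θ - (1 - θ) / ((1 + ε) * (R + θ)) * Real.log lam₀) 0
        < Real.log c := by
      have : (0:ℝ) - (1 - 0) / ((1 + ε) * (R + 0)) * Real.log lam₀
          = -(1 / ((1 + ε) * R)) * Real.log lam₀ := by ring
      simpa [this] using hd
    have hev : ∀ᶠ θ : ℝ in nhds 0,
        θ - (1 - θ) / ((1 + ε) * (R + θ)) * Real.log lam₀ < Real.log c :=
      hcont.tendsto.eventually_lt_const h0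
    have h1' : ∀ᶠ θ : ℝ in nhds (0:ℝ), θ < 1 :=
      tendsto_id.eventually_lt_const (by norm_num)
    have hev2 : ∀ᶠ θ : ℝ in nhdsWithin 0 (Set.Ioi 0),
        (θ - (1 - θ) / ((1 + ε) * (R + θ)) * Real.log lam₀ < Real.log c ∧ θ < 1) ∧
          θ ∈ Set.Ioi (0:ℝ) :=
      ((hev.and h1').filter_mono nhdsWithin_le_nhds).and eventually_mem_nhdsWithin
    obtain ⟨θ, ⟨hθc, hθ1⟩, hθ0⟩ := hev2.exists
    exact ⟨θ, hθ0, hθ1, hθc⟩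
  have hRR : 0 < (1 + ε) * (R + θ) := by positivity
  -- eventual conditions
  obtain ⟨K₁, hK₁⟩ := (hkac.eventually_lt_const (show R < R + θ by linarith)).exists_forall_of_atTop
  set K : ℕ := max (max k₀ K₁) 1 with hKd
  have htendN : Tendsto (fun n : ℕ => (n:ℝ)) atTop atTop := tendsto_natCast_atTop_atTop
  have ev1 : ∀ᶠ n : ℕ in atTop, nk K ≤ n := eventually_ge_atTop (nk K)
  have ev2 : ∀ᶠ n : ℕ in atTop, Real.log (δ₀⁻¹ * B) ≤ (n:ℝ) * θ :=
    (htendN.atTop_mul_const hθ0).eventually_ge_atTop _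
  have ev3 : ∀ᶠ n : ℕ in atTop, ((nk 0 : ℕ):ℝ) ≤ θ * (n:ℝ) :=
    (htendN.const_mul_atTop hθ0).eventually_ge_atTop _
  have ev4 : ∀ᶠ n : ℕ in atTop, 1 ≤ n := eventually_ge_atTop 1
  refine Filter.limsup_le_of_le
    (isCoboundedUnder_le_of_le atTop (fun n => Real.rpow_nonneg (ha n) _)) ?_
  filter_upwards [ev1, ev2, ev3, ev4] with n hn1 hn2 hn3 hn4
  set k : ℕ := kn n with hkd
  have hkK : K ≤ k := hC K n hn1
  have hk₀ : k₀ ≤ k := le_trans (le_trans (le_max_left _ _) (le_max_left _ _)) hkK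
  have hkK₁ : K₁ ≤ k := le_trans (le_trans (le_max_right _ _) (le_max_left _ _)) hkK
  have hk1 : 1 ≤ k := le_trans (le_max_right _ _) hkK
  have hnk_le : nk k ≤ n := hA n (le_trans (hmono.monotone (Nat.zero_le K)) hn1)
  have hlt : n < nk (k + 1) := hBB n
  have hN : (0:ℝ) < (n:ℝ) := by exact_mod_cast lt_of_lt_of_le one_pos hn4
  have hkpos : (0:ℝ) < (k:ℝ) := by exact_mod_cast lt_of_lt_of_le one_pos hk1
  -- the bound on a n
  have hub : a n ≤ δ₀⁻¹ * B * lam₀ ^ (-(k : ℝ)) := by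
    calc a n ≤ δ₀⁻¹ * a (nk k) := hbetween k n hnk_le hlt
    _ ≤ δ₀⁻¹ * (B * lam₀ ^ (-(k : ℝ))) :=
        mul_le_mul_of_nonneg_left (hank k) (by positivity)
    _ = δ₀⁻¹ * B * lam₀ ^ (-(k : ℝ)) := by ring
  -- the bound on k/n
  have hn₀le : nk 0 ≤ nk k := hmono.monotone (Nat.zero_le k)
  have hn₀le' : nk 0 ≤ nk (k + 1) := hmono.monotone (Nat.zero_le _)
  have hcast1 : ((nk k - nk 0 : ℕ):ℝ) = (nk k : ℝ) - (nk 0 : ℝ) := Nat.cast_sub hn₀le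
  have hcast2 : ((nk (k + 1) - nk 0 : ℕ):ℝ) = (nk (k + 1) : ℝ) - (nk 0 : ℝ) :=
    Nat.cast_sub hn₀le'
  have h6 : (nk k : ℝ) - (nk 0 : ℝ) ≤ (R + θ) * (k:ℝ) := by
    have := hK₁ k hkK₁
    rw [hcast1] at this
    exact le_of_lt ((div_lt_iff₀ hkpos).mp this)
  have g2 : (nk (k + 1) : ℝ) - (nk 0 : ℝ) ≤ (1 + ε) * ((nk k : ℝ) - (nk 0 : ℝ)) := by
    rw [← hcast1, ← hcast2]; exact hgap k hk₀
  have h7 : (n:ℝ) < (nk (k + 1) : ℝ) := by exact_mod_cast hlt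
  have g4 : (1 + ε) * ((nk k : ℝ) - (nk 0 : ℝ)) ≤ (1 + ε) * ((R + θ) * (k:ℝ)) :=
    mul_le_mul_of_nonneg_left h6 h1ε.le
  have e0 : (1 + ε) * ((R + θ) * (k:ℝ)) = (1 + ε) * (R + θ) * (k:ℝ) := by ring
  have h8 : (n:ℝ) - (nk 0 : ℝ) ≤ (1 + ε) * (R + θ) * (k:ℝ) := by linarith
  have e1' : (1 - θ) * (n:ℝ) = (n:ℝ) - θ * (n:ℝ) := by ring
  have h9 : (1 - θ) * (n:ℝ) ≤ (1 + ε) * (R + θ) * (k:ℝ) := by linarith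
  have hknd2 : (1 - θ) / ((1 + ε) * (R + θ)) ≤ (k:ℝ) / (n:ℝ) := by
    rw [div_le_div_iff₀ hRR hN]
    have e2' : (k:ℝ) * ((1 + ε) * (R + θ)) = (1 + ε) * (R + θ) * (k:ℝ) := by ring
    linarith
  -- conclude
  rcases eq_or_lt_of_le (ha n) with h0 | hpos
  · rw [← h0, Real.zero_rpow]
    · exact hcpos.le
    · positivity
  · have hanpos : 0 < a n := hpos
    have hlog : Real.log (a n) ≤ Real.log (δ₀⁻¹ * B) + (-(k:ℝ)) * Real.log lam₀ := by
      calc Real.log (a n) ≤ Real.log (δ₀⁻¹ * B * lam₀ ^ (-(k : ℝ))) :=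
            Real.log_le_log hanpos hub
      _ = Real.log (δ₀⁻¹ * B) + (-(k:ℝ)) * Real.log lam₀ := by
            rw [Real.log_mul (by positivity) (ne_of_gt (Real.rpow_pos_of_pos hlampos _)),
              Real.log_rpow hlampos]
    rw [Real.rpow_def_of_pos hanpos, ← Real.exp_log hcpos]
    apply Real.exp_le_exp.mpr
    have e1 : Real.log (a n) * (1 / (n:ℝ))
        ≤ (Real.log (δ₀⁻¹ * B) + (-(k:ℝ)) * Real.log lam₀) * (1 / (n:ℝ)) :=
      mul_le_mul_of_nonneg_right hlog (by positivity)
    have e2 : Real.log (δ₀⁻¹ * B) * (1 / (n:ℝ)) ≤ θ := by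
      rw [mul_one_div, div_le_iff₀ hN]
      linarith [hn2]
    have e3 : (1 - θ) / ((1 + ε) * (R + θ)) * Real.log lam₀
        ≤ ((k:ℝ) / (n:ℝ)) * Real.log lam₀ :=
      mul_le_mul_of_nonneg_right hknd2 hloglam.le
    have e4 : (Real.log (δ₀⁻¹ * B) + (-(k:ℝ)) * Real.log lam₀) * (1 / (n:ℝ))
        = Real.log (δ₀⁻¹ * B) * (1 / (n:ℝ)) - ((k:ℝ) / (n:ℝ)) * Real.log lam₀ := by
      ring
    calc Real.log (a n) * (1 / (n:ℝ))
        ≤ (Real.log (δ₀⁻¹ * B) + (-(k:ℝ)) * Real.log lam₀) * (1 / (n:ℝ)) := e1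
      _ = Real.log (δ₀⁻¹ * B) * (1 / (n:ℝ)) - ((k:ℝ) / (n:ℝ)) * Real.log lam₀ := e4
      _ ≤ θ - (1 - θ) / ((1 + ε) * (R + θ)) * Real.log lam₀ := by linarith
      _ ≤ Real.log c := hθ.le
end
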